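/- arXiv:1306.3409 — 2 statements merged into one kernel-verified Lean document; each statement's English description precedes it below -/
import Mathlib

section
/- If R̂ is submodular with R̂(∅)=0, then the minimum of R̂ over all subsets of V equals the minimum of its Lovasz extension R over the unit hypercube [0,1]^n. -/
open Finset

noncomputable def sortedVal {n : ℕ} (f : Fin n → ℝ) : Fin n → ℝ := f ∘ Tuple.sort f

noncomputable def thresholdSet {n : ℕ} (f : Fin n → ℝ) (i : Fin n) : Finset (Fin n) :=
  Finset.univ.filter (fun j => sortedVal f i ≤ f j)

noncomputable def lovasz {n : ℕ} (R : Finset (Fin n) → ℝ) (f : Fin n → ℝ) : ℝ :=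
  (∑ i : Fin n, if h : (i : ℕ) + 1 < n then
      R (thresholdSet f ⟨(i : ℕ) + 1, h⟩) * (sortedVal f ⟨(i : ℕ) + 1, h⟩ - sortedVal f i)
    else 0)
  + R Finset.univ * (if h : 0 < n then sortedVal f ⟨0, h⟩ else 0)

def Submodular {α : Type*} [DecidableEq α] (R : Finset α → ℝ) : Prop :=
  ∀ A B : Finset α, R (A ∪ B) + R (A ∩ B) ≤ R A + R B

/-!
For `f ∈ [0,1]ⁿ` with sorted values `g₀ ≤ ⋯ ≤ gₙ₋₁`, the Lovász extension is
`∑ᵢ R(Cᵢ) (gᵢ - gᵢ₋₁)` (with `g₋₁ = 0` and `C₀ = V`): a combination of values of `R` with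
nonnegative weights of total mass `gₙ₋₁ ≤ 1`. As `min R ≤ R ∅ = 0`, it is at least `min R`.
At the indicator of `S` every nonzero weight sits on a level set equal to `S`, so it takes the
value `R S`. Hence both infima equal `min R`.
-/

theorem Fin.sum_univ_succ_sub_castSucc {M : Type*} [AddCommGroup M] {k : ℕ}
    (g : Fin (k + 1) → M) :
    ∑ i : Fin k, (g i.succ - g i.castSucc) = g (Fin.last k) - g 0 := by
  induction k with
  | zero => simp
  | succ k ih =>
    have := ih (g ∘ Fin.castSucc)
    simp only [Function.comp_apply, ← Fin.succ_castSucc, Fin.castSucc_zero] at this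
    rw [Fin.sum_univ_castSucc, this, ← Fin.succ_last, sub_add_sub_cancel']

section Lovasz

variable {n : ℕ}

lemma monotone_sortedVal (f : Fin n → ℝ) : Monotone (sortedVal f) :=
  Tuple.monotone_sort f

lemma sortedVal_symm_sort (f : Fin n → ℝ) (j : Fin n) :
    sortedVal f ((Tuple.sort f).symm j) = f j := by
  simp [sortedVal]

lemma sortedVal_zero_le {k : ℕ} (f : Fin (k + 1) → ℝ) (j : Fin (k + 1)) :
    sortedVal f 0 ≤ f j :=
  sortedVal_symm_sort f j ▸ monotone_sortedVal f (Fin.zero_le _)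

lemma le_sortedVal_last {k : ℕ} (f : Fin (k + 1) → ℝ) (j : Fin (k + 1)) :
    f j ≤ sortedVal f (Fin.last k) :=
  sortedVal_symm_sort f j ▸ monotone_sortedVal f (Fin.le_last _)

lemma thresholdSet_zero {k : ℕ} (f : Fin (k + 1) → ℝ) : thresholdSet f 0 = univ := by
  simp [thresholdSet, sortedVal_zero_le]

lemma lovasz_fin_zero (R : Finset (Fin 0) → ℝ) (f : Fin 0 → ℝ) : lovasz R f = 0 := by
  simp [lovasz]

lemma lovasz_succ {k : ℕ} (R : Finset (Fin (k + 1)) → ℝ) (f : Fin (k + 1) → ℝ) :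
    lovasz R f =
      ∑ i : Fin k, R (thresholdSet f i.succ) * (sortedVal f i.succ - sortedVal f i.castSucc)
        + R (thresholdSet f 0) * sortedVal f 0 := by
  rw [lovasz, Fin.sum_univ_castSucc, dif_neg (by simp), add_zero, dif_pos k.succ_pos,
    ← thresholdSet_zero f]
  congr 1
  exact sum_congr rfl fun i _ => dif_pos (by simp)

lemma lovasz_const {k : ℕ} (c : ℝ) (f : Fin (k + 1) → ℝ) :
    lovasz (fun _ => c) f = c * sortedVal f (Fin.last k) := by
  rw [lovasz_succ, ← mul_sum, Fin.sum_univ_succ_sub_castSucc]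
  ring

lemma sortedVal_castSucc_le_succ {k : ℕ} (f : Fin (k + 1) → ℝ) (i : Fin k) :
    sortedVal f i.castSucc ≤ sortedVal f i.succ :=
  monotone_sortedVal f (Fin.castSucc_le_succ i)

lemma lovasz_mono_of_nonneg {k : ℕ} {R R' : Finset (Fin (k + 1)) → ℝ} (hRR' : ∀ T, R T ≤ R' T)
    {f : Fin (k + 1) → ℝ} (hf : ∀ i, 0 ≤ f i) : lovasz R f ≤ lovasz R' f := by
  rw [lovasz_succ, lovasz_succ]
  gcongr with i
  · exact sub_nonneg.2 (sortedVal_castSucc_le_succ f i)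
  · exact hRR' _
  · exact hf _
  · exact hRR' _

lemma lovasz_congr_of_nonneg {k : ℕ} {R R' : Finset (Fin (k + 1)) → ℝ} {f : Fin (k + 1) → ℝ}
    (hf : ∀ i, 0 ≤ f i)
    (hRR' : ∀ i, 0 < sortedVal f i → R (thresholdSet f i) = R' (thresholdSet f i)) :
    lovasz R f = lovasz R' f := by
  have hterm : ∀ j d, 0 ≤ d → d ≤ sortedVal f j →
      R (thresholdSet f j) * d = R' (thresholdSet f j) * d := by
    intro j d hd0 hdj
    rcases lt_or_ge 0 (sortedVal f j) with hj | hj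
    · rw [hRR' j hj]
    · obtain rfl : d = 0 := by linarith
      simp
  rw [lovasz_succ, lovasz_succ]
  congr 1
  · refine sum_congr rfl fun i _ => hterm _ _ ?_ ?_
    · exact sub_nonneg.2 (sortedVal_castSucc_le_succ f i)
    · exact sub_le_self _ (hf _)
  · exact hterm _ _ (hf _) le_rfl

lemma lovasz_indicator {R : Finset (Fin n) → ℝ} (hR : R ∅ = 0) (S : Finset (Fin n)) :
    lovasz R (fun i => if i ∈ S then 1 else 0) = R S := by
  cases n with
  | zero => simp [lovasz_fin_zero, S.eq_empty_of_isEmpty, hR]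
  | succ k =>
    set f : Fin (k + 1) → ℝ := fun i => if i ∈ S then 1 else 0
    have hf : ∀ i, 0 ≤ f i := fun i => by positivity
    have hval : ∀ i, sortedVal f i = 0 ∨ sortedVal f i = 1 := fun i => by
      simp only [sortedVal, Function.comp_apply, f]
      split_ifs <;> simp
    have hthr : ∀ i, 0 < sortedVal f i → thresholdSet f i = S := fun i hi => by
      obtain h | h := hval i
      · exact absurd h hi.ne'
      · ext j
        by_cases hjS : j ∈ S <;> simp [thresholdSet, h, f, hjS]
    rw [lovasz_congr_of_nonneg hf (R' := fun _ => R S) fun i hi => congrArg R (hthr i hi),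
      lovasz_const]
    rcases S.eq_empty_or_nonempty with rfl | ⟨j, hj⟩
    · simp [hR]
    · have hlast : sortedVal f (Fin.last k) = 1 := by
        refine (hval _).resolve_left fun h => ?_
        have := le_sortedVal_last f j
        norm_num [h, f, hj] at this
      rw [hlast, mul_one]

lemma le_lovasz_of_forall_le {R : Finset (Fin n) → ℝ} {m : ℝ} (hm : m ≤ 0) (hmR : ∀ T, m ≤ R T)
    {f : Fin n → ℝ} (hf : ∀ i, f i ∈ Set.Icc (0 : ℝ) 1) : m ≤ lovasz R f := by
  cases n with
  | zero => simpa [lovasz_fin_zero] using hm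
  | succ k =>
    calc m ≤ m * sortedVal f (Fin.last k) := le_mul_of_le_one_right hm (hf _).2
      _ = lovasz (fun _ => m) f := (lovasz_const m f).symm
      _ ≤ lovasz R f := lovasz_mono_of_nonneg hmR fun i => (hf i).1

end Lovasz

theorem submodular_min_hypercube_general {n : ℕ} (R : Finset (Fin n) → ℝ)
    (hR : R ∅ = 0) :
    sInf (Set.range R)
      = sInf (lovasz R '' {f : Fin n → ℝ | ∀ i, f i ∈ Set.Icc (0 : ℝ) 1}) := by
  obtain ⟨S, hS⟩ := Finite.exists_min R
  have hcube : (fun i => if i ∈ S then 1 else 0) ∈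
      {f : Fin n → ℝ | ∀ i, f i ∈ Set.Icc (0 : ℝ) 1} := fun i => by
    by_cases hi : i ∈ S <;> simp [hi]
  have hleast : IsLeast (lovasz R '' {f : Fin n → ℝ | ∀ i, f i ∈ Set.Icc (0 : ℝ) 1}) (R S) := by
    refine ⟨⟨_, hcube, lovasz_indicator hR S⟩, ?_⟩
    rintro _ ⟨f, hf, rfl⟩
    exact le_lovasz_of_forall_le (hR ▸ hS ∅) hS hf
  rw [hleast.csInf_eq]
  exact IsLeast.csInf_eq ⟨⟨S, rfl⟩, Set.forall_mem_range.2 hS⟩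

/-- for submodular R̂, min over subsets equals min of the Lovász
extension over the unit hypercube [0,1]^n. -/
theorem submodular_min_hypercube {n : ℕ} (R : Finset (Fin n) → ℝ)
    (hR : R ∅ = 0) (hsub : Submodular R) :
    sInf (Set.range R)
      = sInf (lovasz R '' {f : Fin n → ℝ | ∀ i, f i ∈ Set.Icc (0 : ℝ) 1}) :=
  submodular_min_hypercube_general R hR
end

section
/- In the setting of the exact penalty theorem, with γ > (R̂(C₀)/(θŜ(C₀))) max_C Ŝ(C): for any f ∈ ℝ₊^n whose continuous penalized ratio Q_γ(f) = (R(f)+γT(f))/S(f) is strictly below Q̂_γ(C₀) = R̂(C₀)/Ŝ(C₀), one has Q_γ(f) ≥ min_{i} Q̂_γ(C_i) over the thresholded sets C_i of f, and any minimizing thresholded set is feasible. -/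
open Finset

/-- The Lovász extension is linear in the set function. -/
lemma lovasz_comb {n : ℕ} (R T : Finset (Fin n) → ℝ) (γ : ℝ) (f : Fin n → ℝ) :
    lovasz (fun C => R C + γ * T C) f = lovasz R f + γ * lovasz T f := by
  unfold lovasz
  have key : ∀ i : Fin n,
      (if h : (i : ℕ) + 1 < n then
        (R (thresholdSet f ⟨(i : ℕ) + 1, h⟩) + γ * T (thresholdSet f ⟨(i : ℕ) + 1, h⟩)) *
          (sortedVal f ⟨(i : ℕ) + 1, h⟩ - sortedVal f i) else 0)
      = (if h : (i : ℕ) + 1 < n then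
          R (thresholdSet f ⟨(i : ℕ) + 1, h⟩) *
            (sortedVal f ⟨(i : ℕ) + 1, h⟩ - sortedVal f i) else 0)
        + γ * (if h : (i : ℕ) + 1 < n then
          T (thresholdSet f ⟨(i : ℕ) + 1, h⟩) *
            (sortedVal f ⟨(i : ℕ) + 1, h⟩ - sortedVal f i) else 0) := by
    intro i; split <;> ring
  rw [Finset.sum_congr rfl fun i _ => key i, Finset.sum_add_distrib, ← Finset.mul_sum]
  ring

/-- Scaling of the Lovász extension. -/
lemma lovasz_smul {n : ℕ} (S : Finset (Fin n) → ℝ) (c : ℝ) (f : Fin n → ℝ) :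
    lovasz (fun C => c * S C) f = c * lovasz S f := by
  unfold lovasz
  have key : ∀ i : Fin n,
      (if h : (i : ℕ) + 1 < n then
        (c * S (thresholdSet f ⟨(i : ℕ) + 1, h⟩)) *
          (sortedVal f ⟨(i : ℕ) + 1, h⟩ - sortedVal f i) else 0)
      = c * (if h : (i : ℕ) + 1 < n then
          S (thresholdSet f ⟨(i : ℕ) + 1, h⟩) *
            (sortedVal f ⟨(i : ℕ) + 1, h⟩ - sortedVal f i) else 0) := by
    intro i; split <;> ring
  rw [Finset.sum_congr rfl fun i _ => key i, ← Finset.mul_sum]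
  ring

/-- Monotonicity of the Lovász extension in the set function (on threshold sets). -/
lemma lovasz_mono {n : ℕ} (g h : Finset (Fin n) → ℝ) (f : Fin n → ℝ)
    (hf : ∀ i, 0 ≤ f i) (hn : 0 < n)
    (hgh : ∀ i : Fin n, g (thresholdSet f i) ≤ h (thresholdSet f i))
    (huniv : Finset.univ = thresholdSet f ⟨0, hn⟩) :
    lovasz g f ≤ lovasz h f := by
  unfold lovasz
  have hmono : Monotone (sortedVal f) := Tuple.monotone_sort f
  apply add_le_add
  · apply Finset.sum_le_sum
    intro i _
    split
    · rename_i hlt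
      apply mul_le_mul_of_nonneg_right (hgh _)
      have hle : (i : Fin n) ≤ ⟨(i : ℕ) + 1, hlt⟩ := by
        simp [Fin.le_def]
      linarith [hmono hle]
    · exact le_rfl
  · split
    · rename_i h0
      apply mul_le_mul_of_nonneg_right
      · rw [huniv]; exact hgh _
      · exact hf (Tuple.sort f ⟨0, h0⟩)
    · exact absurd hn (by assumption)

/-- continuous exact penalty: if the continuous penalized ratio of f
is strictly below Q̂_γ(C₀), then it dominates the best thresholded penalized ratio,
and every minimizing thresholded set is feasible. -/
theorem exact_penalty_thresholding {n : ℕ}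
    (R S : Finset (Fin n) → ℝ) (hR0 : R ∅ = 0) (hS0 : S ∅ = 0)
    (hRpos : ∀ A : Finset (Fin n), 0 ≤ R A) (hSpos : ∀ A : Finset (Fin n), 0 ≤ S A)
    (K : ℕ) (M : Fin K → Finset (Fin n) → ℝ) (k : Fin K → ℝ)
    (T : Finset (Fin n) → ℝ)
    (hT : ∀ C : Finset (Fin n), T C = if C = ∅ then 0 else ∑ i, max 0 (M i C - k i))
    (θ : ℝ) (hθpos : 0 < θ)
    (hθle : ∀ (i : Fin K) (C : Finset (Fin n)), k i < M i C → θ ≤ M i C - k i)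
    (hθatt : ∃ (i : Fin K) (C : Finset (Fin n)), k i < M i C ∧ M i C - k i = θ)
    (C₀ : Finset (Fin n)) (hC₀ : ∀ i, M i C₀ ≤ k i) (hSC₀ : 0 < S C₀)
    (γ : ℝ) (hγ : R C₀ / (θ * S C₀) * sSup (Set.range S) < γ)
    (f : Fin n → ℝ) (hf : ∀ i, 0 ≤ f i) (hSf : 0 < lovasz S f)
    (hlt : (lovasz R f + γ * lovasz T f) / lovasz S f < R C₀ / S C₀) :
    (∃ i : Fin n, 0 < S (thresholdSet f i) ∧
        (R (thresholdSet f i) + γ * T (thresholdSet f i)) / S (thresholdSet f i)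
          ≤ (lovasz R f + γ * lovasz T f) / lovasz S f) ∧
    (∀ i : Fin n, 0 < S (thresholdSet f i) →
        (∀ j : Fin n, 0 < S (thresholdSet f j) →
          (R (thresholdSet f i) + γ * T (thresholdSet f i)) / S (thresholdSet f i)
            ≤ (R (thresholdSet f j) + γ * T (thresholdSet f j)) / S (thresholdSet f j)) →
        ∀ i', M i' (thresholdSet f i) ≤ k i') := by
  have hn : 0 < n := by
    rcases Nat.eq_zero_or_pos n with h | h
    · subst h; simp [lovasz] at hSf
    · exact h
  have hbdd : BddAbove (Set.range S) := (Set.finite_range S).bddAbove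
  have hsup_le : ∀ C, S C ≤ sSup (Set.range S) := fun C => le_csSup hbdd ⟨C, rfl⟩
  have hsup_pos : 0 < sSup (Set.range S) := lt_of_lt_of_le hSC₀ (hsup_le C₀)
  have hγ0 : 0 < γ := by
    refine lt_of_le_of_lt ?_ hγ
    exact mul_nonneg (div_nonneg (hRpos C₀) (by positivity)) hsup_pos.le
  have hTpos : ∀ C, 0 ≤ T C := by
    intro C
    rw [hT C]
    split
    · exact le_rfl
    · exact Finset.sum_nonneg fun i _ => le_max_left 0 _
  have hkey : ∀ j, sortedVal f ⟨0, hn⟩ ≤ f j := by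
    intro j
    have hle : (⟨0, hn⟩ : Fin n) ≤ (Tuple.sort f).symm j := by simp [Fin.le_def]
    have := Tuple.monotone_sort f hle
    simpa [sortedVal] using this
  have hC0 : Finset.univ = thresholdSet f ⟨0, hn⟩ := by
    ext j; simp [thresholdSet, hkey j]
  have hne : ∃ i : Fin n, 0 < S (thresholdSet f i) := by
    by_contra hcon
    push_neg at hcon
    have hz : ∀ i, S (thresholdSet f i) = 0 := fun i => le_antisymm (hcon i) (hSpos _)
    have h2 : S Finset.univ = 0 := by rw [hC0]; exact hz _
    have : lovasz S f = 0 := by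
      unfold lovasz
      rw [Finset.sum_eq_zero (fun i _ => by split <;> simp [hz]), h2]
      ring
    linarith
  obtain ⟨i₀, hi₀⟩ := hne
  obtain ⟨iS, hiSmem, hiSmin⟩ := Finset.exists_min_image
    (Finset.univ.filter fun i => 0 < S (thresholdSet f i))
    (fun i => (R (thresholdSet f i) + γ * T (thresholdSet f i)) / S (thresholdSet f i))
    ⟨i₀, by simp [hi₀]⟩
  have hiSpos : 0 < S (thresholdSet f iS) := (Finset.mem_filter.mp hiSmem).2
  set m := (R (thresholdSet f iS) + γ * T (thresholdSet f iS)) / S (thresholdSet f iS)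
    with hm
  have hpt : ∀ i : Fin n,
      m * S (thresholdSet f i) ≤ R (thresholdSet f i) + γ * T (thresholdSet f i) := by
    intro i
    by_cases hpos : 0 < S (thresholdSet f i)
    · have hmin := hiSmin i (Finset.mem_filter.mpr ⟨Finset.mem_univ _, hpos⟩)
      calc m * S (thresholdSet f i)
          ≤ (R (thresholdSet f i) + γ * T (thresholdSet f i)) / S (thresholdSet f i)
              * S (thresholdSet f i) := mul_le_mul_of_nonneg_right hmin hpos.le
        _ = R (thresholdSet f i) + γ * T (thresholdSet f i) :=
            div_mul_cancel₀ _ (ne_of_gt hpos)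
    · have h0 : S (thresholdSet f i) = 0 := le_antisymm (le_of_not_gt hpos) (hSpos _)
      rw [h0, mul_zero]
      have := hTpos (thresholdSet f i)
      nlinarith [hRpos (thresholdSet f i)]
  have hmain : m * lovasz S f ≤ lovasz R f + γ * lovasz T f := by
    have h2 := lovasz_mono (fun C => m * S C) (fun C => R C + γ * T C) f hf hn
      (fun i => hpt i) hC0
    rw [lovasz_smul S m f, lovasz_comb R T γ f] at h2
    exact h2
  have hQm : m ≤ (lovasz R f + γ * lovasz T f) / lovasz S f :=
    (le_div_iff₀ hSf).mpr hmain
  refine ⟨⟨iS, hiSpos, hQm⟩, ?_⟩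
  intro i hiS2 hmini i'
  by_contra hcon
  push_neg at hcon
  have hΦiQ : (R (thresholdSet f i) + γ * T (thresholdSet f i)) / S (thresholdSet f i)
      ≤ (lovasz R f + γ * lovasz T f) / lovasz S f :=
    le_trans (hmini iS hiSpos) hQm
  have hΦlt : (R (thresholdSet f i) + γ * T (thresholdSet f i)) / S (thresholdSet f i)
      < R C₀ / S C₀ := lt_of_le_of_lt hΦiQ hlt
  have hCne : thresholdSet f i ≠ ∅ := by
    intro h
    rw [h, hS0] at hiS2
    exact lt_irrefl 0 hiS2
  have hTC : θ ≤ T (thresholdSet f i) := by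
    rw [hT _, if_neg hCne]
    calc θ ≤ M i' (thresholdSet f i) - k i' := hθle i' _ hcon
      _ ≤ max 0 (M i' (thresholdSet f i) - k i') := le_max_right _ _
      _ ≤ ∑ j, max 0 (M j (thresholdSet f i) - k j) :=
          Finset.single_le_sum (f := fun j => max 0 (M j (thresholdSet f i) - k j))
            (fun j _ => le_max_left _ _) (Finset.mem_univ i')
  have hlow : γ * θ / sSup (Set.range S)
      ≤ (R (thresholdSet f i) + γ * T (thresholdSet f i)) / S (thresholdSet f i) := by
    have hnum : γ * θ ≤ R (thresholdSet f i) + γ * T (thresholdSet f i) := by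
      nlinarith [hRpos (thresholdSet f i)]
    have hnn : (0:ℝ) ≤ R (thresholdSet f i) + γ * T (thresholdSet f i) := by
      nlinarith [hTpos (thresholdSet f i), hRpos (thresholdSet f i)]
    exact div_le_div₀ hnn hnum hiS2 (hsup_le _)
  have hup : R C₀ / S C₀ < γ * θ / sSup (Set.range S) := by
    rw [div_lt_div_iff₀ hSC₀ hsup_pos]
    rw [div_mul_eq_mul_div] at hγ
    have h3 := (div_lt_iff₀ (by positivity : (0:ℝ) < θ * S C₀)).mp hγ
    nlinarith
  linarith
end
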